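/- Let N ≥ 1, d ≥ 1, and let z_1, ..., z_{N+1} be the roots of P(z) = (z-1)^N (z-y) - qz over an algebraic closure of ℚ(q,y). For ℓ ≥ 1, let h_j denote complete homogeneous and e_j elementary symmetric polynomials in z_1,...,z_{N+1}, and for 0 ≤ m ≤ N let s_{(ℓ,1^{N-m})} be the hook Schur polynomial. Then [q^d] Σ_{m=0}^{N} (-y)^m s_{(ℓ,1^{N-m})}(z_1,...,z_{N+1}) = (-1)^N [t^ℓ] ( y t^{N(d-1)+1} / ((1-t)^{Nd} (1-yt)^{d+1}) ). -/

import Mathlib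

/-! Write `E(t) = ∑ⱼ (-1)^j e_j t^j = (1-t)^N (1-yt) - q t^N` and `H = 1/E = ∑ᵣ h_r t^r`.
Expanding the dual Jacobi–Trudi determinant of a hook with first column of length `a` along
that column gives `(-1)^(a+1) ∑_{j<a} [t^j]E · h_{a+ℓ-1-j}`. Against the weights `(-y)^m` the
double sum becomes `(-1)^N [t^(N+ℓ)] (B H)`, where `B = (1-t)^N - q t^N` is `E/(1-yt)` truncated
at degree `N`; as `B = E + yt(1-t)^N`, this is `(-1)^N y [t^(N+ℓ-1)] (1-t)^N H`. Finally, with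
`F = (1-t)^N (1-yt)`, the `q`-expansion `1/(F - q t^N) = ∑_d q^d t^(Nd) / F^(d+1)` gives the
`q^d`-coefficient. -/

open Polynomial

/-- `P(z) = (z-1)^N (z-y) - qz`, a polynomial in `z` over `ℚ(y)[q]`. -/
noncomputable def Pz (N : ℕ) : Polynomial (Polynomial (RatFunc ℚ)) :=
  (Polynomial.X - 1) ^ N * (Polynomial.X - Polynomial.C (Polynomial.C RatFunc.X)) -
    Polynomial.C Polynomial.X * Polynomial.X

/-- `e_j(z_1,…,z_{N+1}) ∈ ℚ(y)[q]` via Vieta: `e_j = (-1)^j ⬝ [z^(N+1-j)] P`. -/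
noncomputable def elemE (N : ℕ) (j : ℤ) : Polynomial (RatFunc ℚ) :=
  if 0 ≤ j ∧ j ≤ (N : ℤ) + 1 then
    (-1 : Polynomial (RatFunc ℚ)) ^ j.toNat * (Pz N).coeff (N + 1 - j.toNat)
  else 0

/-- The dual Jacobi–Trudi matrix of the hook `(ℓ, 1^(N-m))`, of size `ℓ`:
conjugate partition `(N-m+1, 1^(ℓ-1))`, entries `e_{λ'_i - i + j}`. -/
noncomputable def hookM (N m ℓ : ℕ) : Matrix (Fin ℓ) (Fin ℓ) (Polynomial (RatFunc ℚ)) :=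
  Matrix.of fun i j =>
    if (i : ℕ) = 0 then elemE N ((N : ℤ) - m + (j : ℕ) + 1)
    else elemE N (((j : ℕ) : ℤ) - ((i : ℕ) : ℤ) + 1)

section HookJacobiTrudi

variable {R : Type*} [CommRing R]

/-- For `a = λ'₁`, the dual Jacobi–Trudi matrix of a hook `λ` in the sequence `e`. -/
def hookJacobiTrudi (e : ℤ → R) (a : ℤ) (n : ℕ) : Matrix (Fin n) (Fin n) R :=
  Matrix.of fun i j => if (i : ℕ) = 0 then e (a + (j : ℕ)) else e ((j : ℕ) - (i : ℕ) + 1)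

theorem det_hookJacobiTrudi_succ_succ {e : ℤ → R} (he₀ : e 0 = 1) (he_neg : ∀ j < 0, e j = 0)
    (a : ℤ) (n : ℕ) :
    (hookJacobiTrudi e a (n + 2)).det =
      e a * (hookJacobiTrudi e 1 (n + 1)).det - (hookJacobiTrudi e (a + 1) (n + 1)).det := by
  -- expand along column `0`, whose only nonzero entries are `e a` and `e 0 = 1`
  rw [Matrix.det_succ_column_zero, Fin.sum_univ_succ, Fin.sum_univ_succ,
    Finset.sum_eq_zero fun i _ => ?_]
  · have h₀ : (hookJacobiTrudi e a (n + 2)).submatrix (Fin.succAbove 0) Fin.succ =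
        hookJacobiTrudi e 1 (n + 1) := by
      ext i j
      simp only [hookJacobiTrudi, Matrix.submatrix_apply, Fin.succAbove_zero, Matrix.of_apply,
        Fin.val_succ, Nat.add_one_ne_zero, if_false]
      split_ifs with hi
      · congr 1; push_cast; omega
      · congr 1; push_cast; ring
    have h₁ : (hookJacobiTrudi e a (n + 2)).submatrix (Fin.succ 0).succAbove Fin.succ =
        hookJacobiTrudi e (a + 1) (n + 1) := by
      ext i j
      rcases Fin.eq_zero_or_eq_succ i with rfl | ⟨i, rfl⟩
      · simp [hookJacobiTrudi, Fin.succAbove, add_assoc, add_comm (1 : ℤ)]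
      · simp only [hookJacobiTrudi, Matrix.submatrix_apply, Matrix.of_apply, Fin.val_succ]
        rw [Fin.succAbove_of_le_castSucc _ _ (by simp [Fin.le_def])]
        simp only [Fin.val_succ, Nat.add_one_ne_zero, if_false]
        congr 1; push_cast; ring
    have a₀ : hookJacobiTrudi e a (n + 2) 0 0 = e a := by simp [hookJacobiTrudi]
    have a₁ : hookJacobiTrudi e a (n + 2) (Fin.succ 0) 0 = 1 := by simp [hookJacobiTrudi, he₀]
    rw [a₀, a₁, h₀, h₁]
    simp [sub_eq_add_neg]
  · simp only [hookJacobiTrudi, Matrix.of_apply, Fin.val_succ, Fin.val_zero]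
    rw [if_neg (by omega), he_neg _ (by omega), mul_zero, zero_mul]

theorem sum_coeff_mul_coeff_eq_zero {E H : PowerSeries R} (hEH : E * H = 1) {n : ℕ} (hn : n ≠ 0) :
    ∑ j ∈ Finset.range (n + 1), PowerSeries.coeff j E * PowerSeries.coeff (n - j) H = 0 := by
  have h := congr_arg (PowerSeries.coeff n) hEH
  rwa [PowerSeries.coeff_mul, Finset.Nat.sum_antidiagonal_eq_sum_range_succ_mk,
    PowerSeries.coeff_one, if_neg hn] at h

theorem det_hookJacobiTrudi {e : ℤ → R} {E H : PowerSeries R} (hEH : E * H = 1)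
    (hE₀ : PowerSeries.constantCoeff E = 1) (he : ∀ j : ℕ, e j = (-1) ^ j * PowerSeries.coeff j E)
    (he_neg : ∀ j < 0, e j = 0) (n : ℕ) {a : ℕ} (ha : a ≠ 0) :
    (hookJacobiTrudi e a (n + 1)).det = (-1) ^ (a + 1) *
      ∑ j ∈ Finset.range a, PowerSeries.coeff j E * PowerSeries.coeff (a + n - j) H := by
  induction n generalizing a with
  | zero =>
    have hH₀ : PowerSeries.coeff 0 H = 1 := by
      simpa [hE₀] using congr_arg (PowerSeries.coeff 0) hEH
    have h := sum_coeff_mul_coeff_eq_zero hEH ha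
    rw [Finset.sum_range_succ, Nat.sub_self, hH₀, mul_one] at h
    rw [Matrix.det_fin_one, add_zero, eq_neg_of_add_eq_zero_left h]
    simp [hookJacobiTrudi, he, pow_succ]
  | succ n ih =>
    have he₀ : e 0 = 1 := by simpa [hE₀] using he 0
    rw [det_hookJacobiTrudi_succ_succ he₀ he_neg, show (a : ℤ) + 1 = (a + 1 : ℕ) by push_cast; rfl,
      show (1 : ℤ) = (1 : ℕ) from rfl, ih one_ne_zero, ih (Nat.add_one_ne_zero a),
      Finset.sum_range_succ _ a, he]
    simp only [Finset.range_one, Finset.sum_singleton,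
      PowerSeries.coeff_zero_eq_constantCoeff_apply, hE₀, Nat.sub_zero, one_mul,
      add_comm 1 n, show a + 1 + n = a + (n + 1) by omega, Nat.add_sub_cancel_left]
    ring

end HookJacobiTrudi

section QCoeff

variable {R : Type*} [CommRing R]

/-- `[q^d]`, applied to each coefficient of a power series in `t` over `R[q]`. -/
noncomputable def qCoeff (d : ℕ) : PowerSeries R[X] →+ PowerSeries R :=
  AddMonoidHom.mk' (fun f => PowerSeries.mk fun r => (PowerSeries.coeff r f).coeff d)
    fun f g => by ext; simp

@[simp]
theorem coeff_qCoeff (d r : ℕ) (f : PowerSeries R[X]) :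
    PowerSeries.coeff r (qCoeff d f) = (PowerSeries.coeff r f).coeff d := by
  simp [qCoeff]

theorem qCoeff_map_C_mul (d : ℕ) (g : PowerSeries R) (f : PowerSeries R[X]) :
    qCoeff d (PowerSeries.map C g * f) = g * qCoeff d f := by
  ext r
  simp [PowerSeries.coeff_mul]

theorem qCoeff_C_X_mul_succ (d : ℕ) (f : PowerSeries R[X]) :
    qCoeff (d + 1) (PowerSeries.C X * f) = qCoeff d f := by
  ext r
  simp

theorem qCoeff_C_X_mul_zero (f : PowerSeries R[X]) : qCoeff 0 (PowerSeries.C X * f) = 0 := by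
  ext r
  simp

theorem qCoeff_one_zero : qCoeff 0 (1 : PowerSeries R[X]) = 1 := by
  ext r
  by_cases hr : r = 0 <;> simp [PowerSeries.coeff_one, Polynomial.coeff_one, hr]

theorem qCoeff_one_succ (d : ℕ) : qCoeff (d + 1) (1 : PowerSeries R[X]) = 0 := by
  ext r
  by_cases hr : r = 0 <;> simp [PowerSeries.coeff_one, Polynomial.coeff_one, hr]

end QCoeff

theorem qCoeff_eq_of_mul_eq_one {K : Type*} [Field K] {F : PowerSeries K}
    (hF : PowerSeries.constantCoeff F ≠ 0) {n : ℕ} {H : PowerSeries K[X]}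
    (hH : (PowerSeries.map C F - PowerSeries.C X * PowerSeries.X ^ n) * H = 1) (d : ℕ) :
    qCoeff d H = PowerSeries.X ^ (n * d) * F⁻¹ ^ (d + 1) := by
  have key : PowerSeries.map C F * H =
      1 + PowerSeries.C X * (PowerSeries.map C (PowerSeries.X ^ n) * H) := by
    rw [map_pow, PowerSeries.map_X]
    linear_combination hH
  have hFd : ∀ d, F * qCoeff d H = qCoeff d 1 + qCoeff d (PowerSeries.C X *
      (PowerSeries.map C (PowerSeries.X ^ n) * H)) := fun d => by
    rw [← qCoeff_map_C_mul, key, map_add]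
  induction d with
  | zero =>
    rw [mul_zero, pow_zero, one_mul, pow_one, PowerSeries.eq_inv_iff_mul_eq_one hF, mul_comm,
      hFd, qCoeff_one_zero, qCoeff_C_X_mul_zero, add_zero]
  | succ d ih =>
    have h := hFd (d + 1)
    rw [qCoeff_one_succ, qCoeff_C_X_mul_succ, qCoeff_map_C_mul, ih, zero_add] at h
    calc qCoeff (d + 1) H = F⁻¹ * (F * qCoeff (d + 1) H) := by
          rw [← mul_assoc, PowerSeries.inv_mul_cancel F hF, one_mul]
      _ = _ := by rw [h]; ring

theorem Polynomial.reflect_pow_of_natDegree_le {R : Type*} [Semiring R] {p : R[X]} {n : ℕ}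
    (hp : p.natDegree ≤ n) (k : ℕ) : (p ^ k).reflect (k * n) = p.reflect n ^ k := by
  induction k with
  | zero => simp
  | succ k ih =>
    rw [pow_succ, add_mul, one_mul, reflect_mul _ _ (natDegree_pow_le_of_le k hp) hp, ih, pow_succ]

theorem reflect_Pz (N : ℕ) :
    (Pz N).reflect (N + 1) =
      (1 - X) ^ N * (1 - C (C RatFunc.X) * X) - C X * X ^ N := by
  have hX : (X - 1 : (RatFunc ℚ)[X][X]).natDegree ≤ 1 := by compute_degree
  have hpow := reflect_pow_of_natDegree_le hX N
  rw [mul_one] at hpow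
  rw [Pz, reflect_sub, reflect_mul _ _ (by simpa using natDegree_pow_le_of_le N hX)
    (natDegree_X_sub_C_le _), hpow]
  have hXr : (X : (RatFunc ℚ)[X][X]).reflect (N + 1) = X ^ N := by
    simpa [revAt_le] using reflect_monomial (R := (RatFunc ℚ)[X]) (N + 1) 1
  simp [reflect_sub, reflect_C, hXr]

/-- `∑ⱼ (-1)^j e_j t^j = t^(N+1) P(1/t)`. -/
noncomputable def elemSeries (N : ℕ) : PowerSeries (RatFunc ℚ)[X] :=
  ((Pz N).reflect (N + 1) : PowerSeries (RatFunc ℚ)[X])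

/-- `∑ᵣ h_r t^r`. -/
noncomputable def homSeries (N : ℕ) : PowerSeries (RatFunc ℚ)[X] := (elemSeries N).invOfUnit 1

theorem elemSeries_eq (N : ℕ) :
    elemSeries N = PowerSeries.map C ((1 - PowerSeries.X) ^ N *
        (1 - PowerSeries.C RatFunc.X * PowerSeries.X)) - PowerSeries.C X * PowerSeries.X ^ N := by
  rw [elemSeries, reflect_Pz]
  simp

theorem elemSeries_mul_homSeries {N : ℕ} (hN : N ≠ 0) : elemSeries N * homSeries N = 1 :=
  PowerSeries.mul_invOfUnit _ _ (by simp [elemSeries_eq, hN])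

theorem elemE_natCast (N j : ℕ) : elemE N j = (-1) ^ j * PowerSeries.coeff j (elemSeries N) := by
  have hdeg : (Pz N).natDegree ≤ N + 1 := by unfold Pz; compute_degree
  rw [elemSeries, Polynomial.coeff_coe, coeff_reflect, elemE]
  split_ifs with hj
  · rw [revAt_le (by omega), Int.toNat_natCast]
  · rw [revAt_eq_self_of_lt (by omega), coeff_eq_zero_of_natDegree_lt (by omega), mul_zero]

theorem elemE_of_neg (N : ℕ) {j : ℤ} (hj : j < 0) : elemE N j = 0 := by
  rw [elemE, if_neg (by omega)]

theorem hookM_eq_hookJacobiTrudi {N m : ℕ} (hm : m ≤ N) (ℓ : ℕ) :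
    hookM N m ℓ = hookJacobiTrudi (elemE N) (N + 1 - m : ℕ) ℓ := by
  ext i j : 1
  simp only [hookM, hookJacobiTrudi, Matrix.of_apply]
  split_ifs
  · exact congrArg _ (by omega)
  · rfl

theorem det_hookM {N m : ℕ} (hN : N ≠ 0) (hm : m ≤ N) (n : ℕ) :
    (hookM N m (n + 1)).det = (-1) ^ (N - m) * ∑ j ∈ Finset.range (N + 1 - m),
      PowerSeries.coeff j (elemSeries N) * PowerSeries.coeff (N + 1 - m + n - j) (homSeries N) := by
  rw [hookM_eq_hookJacobiTrudi hm, det_hookJacobiTrudi (elemSeries_mul_homSeries hN)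
    (by simp [elemSeries_eq, hN]) (elemE_natCast N) (fun _ => elemE_of_neg N) n (by omega)]
  congr 1
  rw [show N + 1 - m + 1 = N - m + 2 by omega, pow_add]
  simp

theorem PowerSeries.coeff_coe_mul_of_natDegree_le {R : Type*} [CommSemiring R] {p : R[X]} {N : ℕ}
    (hp : p.natDegree ≤ N) (f : PowerSeries R) {M : ℕ} (hM : N ≤ M) :
    PowerSeries.coeff M ((p : PowerSeries R) * f) =
      ∑ s ∈ Finset.range (N + 1), p.coeff s * PowerSeries.coeff (M - s) f := by
  rw [PowerSeries.coeff_mul, Finset.Nat.sum_antidiagonal_eq_sum_range_succ_mk]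
  simp only [Polynomial.coeff_coe]
  symm
  apply Finset.sum_subset (Finset.range_subset_range.2 (by omega))
  intro s _ hs
  rw [coeff_eq_zero_of_natDegree_lt (by simp at hs; omega), zero_mul]

theorem rescale_mk_one_mul_one_sub {R : Type*} [CommRing R] (a : R) :
    PowerSeries.rescale a (PowerSeries.mk 1) * (1 - PowerSeries.C a * PowerSeries.X) = 1 := by
  simpa using congr_arg (PowerSeries.rescale a) (PowerSeries.mk_one_mul_one_sub_eq_one R)

theorem sum_pow_mul_coeff_elemSeries {N s : ℕ} (hs : s ≤ N) :
    ∑ m ∈ Finset.range (s + 1), C RatFunc.X ^ m * PowerSeries.coeff (s - m) (elemSeries N) =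
      ((1 - X) ^ N - C X * X ^ N : (RatFunc ℚ)[X][X]).coeff s := by
  -- `G = 1/(1 - yt)`, and the left side is `[t^s] (G E)`
  set G := PowerSeries.rescale (C RatFunc.X : (RatFunc ℚ)[X]) (PowerSeries.mk 1)
  have hGE : G * elemSeries N = (((1 - X) ^ N - C X * X ^ N : (RatFunc ℚ)[X][X]) :
      PowerSeries (RatFunc ℚ)[X]) - PowerSeries.X ^ (N + 1) *
        (PowerSeries.C (X * C RatFunc.X) * G) := by
    have hG : G * (1 - PowerSeries.C (C RatFunc.X) * PowerSeries.X) = 1 :=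
      rescale_mk_one_mul_one_sub _
    rw [elemSeries_eq]
    simp only [Polynomial.coe_sub, Polynomial.coe_mul, Polynomial.coe_pow, Polynomial.coe_one,
      Polynomial.coe_X, Polynomial.coe_C, map_mul, map_pow, map_sub, map_one, PowerSeries.map_X,
      PowerSeries.map_C]
    linear_combination ((1 - PowerSeries.X) ^ N - PowerSeries.C X * PowerSeries.X ^ N) * hG
  have h := congr_arg (PowerSeries.coeff s) hGE
  rw [map_sub, PowerSeries.coeff_X_pow_mul', if_neg (by omega), sub_zero, Polynomial.coeff_coe,
    PowerSeries.coeff_mul, Finset.Nat.sum_antidiagonal_eq_sum_range_succ_mk] at h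
  simpa [G] using h

theorem sum_hookM_eq_coeff_mul_homSeries {N : ℕ} (hN : N ≠ 0) (n : ℕ) :
    ∑ m ∈ Finset.range (N + 1), C ((-(RatFunc.X : RatFunc ℚ)) ^ m) * (hookM N m (n + 1)).det =
      (-1) ^ N * PowerSeries.coeff (N + n + 1)
        ((((1 - X) ^ N - C X * X ^ N : (RatFunc ℚ)[X][X]) : PowerSeries (RatFunc ℚ)[X]) *
          homSeries N) := by
  set E := elemSeries N
  set H := homSeries N
  have hsummand : ∀ m ∈ Finset.range (N + 1),
      C ((-(RatFunc.X : RatFunc ℚ)) ^ m) * (hookM N m (n + 1)).det = (-1) ^ N *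
        ∑ k ∈ Finset.range (N + 1 - m), C RatFunc.X ^ m * PowerSeries.coeff k E *
          PowerSeries.coeff (N + n + 1 - (m + k)) H := by
    intro m hm
    have hm : m ≤ N := Finset.mem_range_succ_iff.1 hm
    have hsign : (-1 : (RatFunc ℚ)[X]) ^ N = (-1) ^ m * (-1) ^ (N - m) := by
      rw [← pow_add, Nat.add_sub_cancel' hm]
    rw [det_hookM hN hm, Finset.mul_sum, Finset.mul_sum, Finset.mul_sum, hsign]
    refine Finset.sum_congr rfl fun k hk => ?_
    rw [show N + 1 - m + n - k = N + n + 1 - (m + k) by simp at hk; omega, map_pow, map_neg,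
      neg_pow]
    ring
  have hdeg : ((1 - X) ^ N - C X * X ^ N : (RatFunc ℚ)[X][X]).natDegree ≤ N := by compute_degree
  rw [Finset.sum_congr rfl hsummand, ← Finset.mul_sum, ← Finset.sum_range_diag_flip,
    PowerSeries.coeff_coe_mul_of_natDegree_le hdeg _ (by omega)]
  congr 1
  refine Finset.sum_congr rfl fun s hs => ?_
  have hs : s ≤ N := Finset.mem_range_succ_iff.1 hs
  rw [← sum_pow_mul_coeff_elemSeries hs, Finset.sum_mul]
  refine Finset.sum_congr rfl fun m hm => ?_
  rw [show m + (s - m) = s by simp at hm; omega]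

theorem coe_one_sub_pow_sub_mul_homSeries {N : ℕ} (hN : N ≠ 0) :
    (((1 - X) ^ N - C X * X ^ N : (RatFunc ℚ)[X][X]) : PowerSeries (RatFunc ℚ)[X]) * homSeries N =
      1 + PowerSeries.C (C RatFunc.X) * PowerSeries.X *
        ((1 - PowerSeries.X) ^ N * homSeries N) := by
  have h := elemSeries_mul_homSeries hN
  rw [elemSeries_eq] at h
  simp only [Polynomial.coe_sub, Polynomial.coe_mul, Polynomial.coe_pow, Polynomial.coe_one,
    Polynomial.coe_X, Polynomial.coe_C, map_mul, map_pow, map_sub, map_one, PowerSeries.map_X,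
    PowerSeries.map_C] at h ⊢
  linear_combination h

theorem sum_hookM {N : ℕ} (hN : N ≠ 0) (n : ℕ) :
    ∑ m ∈ Finset.range (N + 1), C ((-(RatFunc.X : RatFunc ℚ)) ^ m) * (hookM N m (n + 1)).det =
      C ((-1) ^ N * RatFunc.X) *
        PowerSeries.coeff (N + n) ((1 - PowerSeries.X) ^ N * homSeries N) := by
  rw [sum_hookM_eq_coeff_mul_homSeries hN, coe_one_sub_pow_sub_mul_homSeries hN, map_add,
    PowerSeries.coeff_one, if_neg (by omega), zero_add, mul_assoc, PowerSeries.coeff_C_mul,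
    PowerSeries.coeff_succ_X_mul]
  simp only [map_mul, map_pow, map_neg, map_one]
  ring

theorem qCoeff_one_sub_pow_mul_homSeries {N : ℕ} (hN : N ≠ 0) (d : ℕ) :
    qCoeff (d + 1) ((1 - PowerSeries.X) ^ N * homSeries N) =
      PowerSeries.X ^ N * (PowerSeries.X ^ (N * d) * ((1 - PowerSeries.X) ^ (N * (d + 1)) *
        (1 - PowerSeries.C RatFunc.X * PowerSeries.X) ^ (d + 1 + 1))⁻¹) := by
  set F : PowerSeries (RatFunc ℚ) :=
    (1 - PowerSeries.X) ^ N * (1 - PowerSeries.C RatFunc.X * PowerSeries.X)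
  have hF : PowerSeries.constantCoeff F ≠ 0 := by simp [F]
  have hH := qCoeff_eq_of_mul_eq_one hF (n := N) (H := homSeries N)
    (by rw [← elemSeries_eq]; exact elemSeries_mul_homSeries hN) (d + 1)
  have hQ : (1 - PowerSeries.X) ^ N * F⁻¹ ^ (d + 2) = ((1 - PowerSeries.X) ^ (N * (d + 1)) *
      (1 - PowerSeries.C RatFunc.X * PowerSeries.X) ^ (d + 1 + 1))⁻¹ := by
    rw [PowerSeries.eq_inv_iff_mul_eq_one (by simp)]
    have hring : ∀ u v w : PowerSeries (RatFunc ℚ),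
        u ^ N * w ^ (d + 2) * (u ^ (N * (d + 1)) * v ^ (d + 1 + 1)) = (w * (u ^ N * v)) ^ (d + 2) :=
      fun _ _ _ => by ring
    rw [hring, PowerSeries.inv_mul_cancel F hF, one_pow]
  have hmap : (1 - PowerSeries.X : PowerSeries (RatFunc ℚ)[X]) ^ N =
      PowerSeries.map C ((1 - PowerSeries.X) ^ N) := by simp
  rw [hmap, qCoeff_map_C_mul, hH, ← hQ]
  ring

theorem coeff_qd_hook_sum (N d ℓ : ℕ) (hN : 1 ≤ N) (hd : 1 ≤ d) (hℓ : 1 ≤ ℓ) :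
    (∑ m ∈ Finset.range (N + 1),
        Polynomial.C ((-(RatFunc.X : RatFunc ℚ)) ^ m) * Matrix.det (hookM N m ℓ)).coeff d
      = (-1 : RatFunc ℚ) ^ N *
        PowerSeries.coeff (R := RatFunc ℚ) ℓ
          (PowerSeries.C (R := RatFunc ℚ) RatFunc.X * PowerSeries.X ^ (N * (d - 1) + 1) *
            ((1 - PowerSeries.X) ^ (N * d) *
              (1 - PowerSeries.C (R := RatFunc ℚ) RatFunc.X * PowerSeries.X) ^ (d + 1))⁻¹) := by
  obtain ⟨n, rfl⟩ : ∃ n, ℓ = n + 1 := ⟨ℓ - 1, by omega⟩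
  obtain ⟨d, rfl⟩ : ∃ d', d = d' + 1 := ⟨d - 1, by omega⟩
  have hN₀ : N ≠ 0 := by omega
  set Q : PowerSeries (RatFunc ℚ) := (1 - PowerSeries.X) ^ (N * (d + 1)) *
    (1 - PowerSeries.C RatFunc.X * PowerSeries.X) ^ (d + 1 + 1)
  have hRHS : PowerSeries.coeff (n + 1) (PowerSeries.C RatFunc.X *
      PowerSeries.X ^ (N * (d + 1 - 1) + 1) * Q⁻¹) =
        RatFunc.X * PowerSeries.coeff n (PowerSeries.X ^ (N * d) * Q⁻¹) := by
    rw [Nat.add_sub_cancel, pow_succ', mul_assoc, PowerSeries.coeff_C_mul, mul_assoc,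
      PowerSeries.coeff_succ_X_mul]
  rw [hRHS, sum_hookM hN₀, coeff_C_mul, ← coeff_qCoeff, qCoeff_one_sub_pow_mul_homSeries hN₀,
    add_comm N n, PowerSeries.coeff_X_pow_mul, mul_assoc]
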